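/- arXiv:2311.15388 — 2 statements merged into one kernel-verified Lean document; each statement's English description precedes it below -/
import Mathlib

section
/- For every integer n ≥ 1, the sum of the last parts over all Arndt compositions of n equals ⌊φⁿ⌋, where φ = (1+√5)/2; that is, d(n) = ⌊((1+√5)/2)ⁿ⌋. -/
/-- `l` is a composition of `n`: a finite list of positive integers summing to `n`
(the empty list is the unique composition of `0`). -/
def IsComposition (n : ℕ) (l : List ℕ) : Prop :=
  (∀ x ∈ l, 0 < x) ∧ l.sum = n

/-- The Arndt condition: `σ_{2i-1} > σ_{2i}` (1-based) for every `i` with `2i ≤ ℓ`;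
with 0-based indices, `l[2i] > l[2i+1]` whenever `2i+1 < l.length`. -/
def IsArndt (l : List ℕ) : Prop :=
  ∀ i : ℕ, 2 * i + 1 < l.length → l.getD (2 * i + 1) 0 < l.getD (2 * i) 0

/-- `arndt n` is the number of Arndt compositions of `n`. -/
noncomputable def arndt (n : ℕ) : ℕ :=
  Set.ncard {l : List ℕ | IsComposition n l ∧ IsArndt l}

/-- `arndtParts n m` is the number of Arndt compositions of `n` with exactly `m` parts. -/
noncomputable def arndtParts (n m : ℕ) : ℕ :=
  Set.ncard {l : List ℕ | IsComposition n l ∧ IsArndt l ∧ l.length = m}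

/-- The generalized binomial coefficient `C(a,b) = a(a-1)⋯(a-b+1)/b!` for an integer `a`
and a natural number `b` (represented as a nonnegative integer); it is `0` for negative `b`. -/
def genChoose (a b : ℤ) : ℤ :=
  if 0 ≤ b then (∏ i ∈ Finset.range b.toNat, (a - (i : ℤ))) / (b.toNat.factorial : ℤ) else 0

/-- `lastSum n` is the sum of the last parts over all (nonempty) Arndt compositions of `n`
(the empty composition contributes `0`). -/
noncomputable def lastSum (n : ℕ) : ℕ :=
  ∑ᶠ l ∈ {l : List ℕ | IsComposition n l ∧ IsArndt l}, l.getLastD 0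

/-! Splitting off the first pair `(a, b)` of an Arndt composition (there are `m / 2` pairs with
`a + b = m + 1`) gives the convolution recursion
`d(k + 1) = k + 1 + ∑_{i + j = k} (i / 2) d(j) + ∑_{b ≤ k / 2} b`.
Since `(i + 2) / 2 = i / 2 + 1`, differencing it twice leaves
`d(k + 4) = d(k + 3) + d(k + 2) + k % 2`, so `d(n) + [n even]` is the Lucas number
`Lₙ = φⁿ + ψⁿ`. As `|ψ| < 1` and `ψ < 0`, `ψⁿ` lies in `(0, 1)` for even `n` and in `(-1, 0)`
for odd `n`, which makes `Lₙ - [n even] = ⌊φⁿ⌋`. -/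

open Finset

theorem isComposition_nil_iff {n : ℕ} : IsComposition n [] ↔ n = 0 := by
  simp [IsComposition, eq_comm]

theorem isComposition_cons_iff {n a : ℕ} {l : List ℕ} :
    IsComposition n (a :: l) ↔ 0 < a ∧ a ≤ n ∧ IsComposition (n - a) l := by
  simp only [IsComposition, List.mem_cons, forall_eq_or_imp, List.sum_cons]
  constructor
  · rintro ⟨⟨ha, hl⟩, hsum⟩
    exact ⟨ha, by omega, hl, by omega⟩
  · rintro ⟨ha, han, hl, hsum⟩
    exact ⟨⟨ha, hl⟩, by omega⟩

theorem isArndt_nil : IsArndt [] := by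
  simp [IsArndt]

theorem isArndt_singleton (a : ℕ) : IsArndt [a] := by
  simp [IsArndt]

theorem isArndt_cons_cons_iff {a b : ℕ} {l : List ℕ} :
    IsArndt (a :: b :: l) ↔ b < a ∧ IsArndt l := by
  constructor
  · intro h
    refine ⟨by simpa using h 0 (by simp), fun i hi => ?_⟩
    simpa [Nat.mul_succ] using h (i + 1) (by simp; omega)
  · rintro ⟨hba, hl⟩ (_ | i) hi
    · simpa using hba
    · simpa [Nat.mul_succ] using hl i (by simp [Nat.mul_succ] at hi; omega)

theorem finite_setOf_isComposition_and_isArndt (n : ℕ) :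
    {l | IsComposition n l ∧ IsArndt l}.Finite :=
  (Set.finite_range (Composition.blocks : Composition n → List ℕ)).subset
    fun l hl => ⟨⟨l, hl.1.1 _, hl.1.2⟩, rfl⟩

noncomputable def arndtFinset (n : ℕ) : Finset (List ℕ) :=
  (finite_setOf_isComposition_and_isArndt n).toFinset

@[simp]
theorem mem_arndtFinset {n : ℕ} {l : List ℕ} :
    l ∈ arndtFinset n ↔ IsComposition n l ∧ IsArndt l :=
  Set.Finite.mem_toFinset _

theorem lastSum_eq_sum (n : ℕ) : lastSum n = ∑ l ∈ arndtFinset n, l.getLastD 0 :=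
  finsum_mem_eq_finite_toFinset_sum _ _

theorem arndtFinset_zero : arndtFinset 0 = {[]} := by
  ext (_ | ⟨a, l⟩)
  · simp [isComposition_nil_iff, isArndt_nil]
  · simp only [mem_arndtFinset, isComposition_cons_iff, mem_singleton, reduceCtorEq, iff_false]
    omega

/- An Arndt composition of `k + 1` is either `[k + 1]` or `(m + 1 - b) :: b :: l`, encoded as
`⟨(m, r), b, l⟩`, where `m + r = k`, `1 ≤ b ≤ m / 2` and `l` is an Arndt composition of `r`. -/
theorem arndtFinset_succ (k : ℕ) :
    arndtFinset (k + 1) = insert [k + 1]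
      (((antidiagonal k).sigma fun p => Icc 1 (p.1 / 2) ×ˢ arndtFinset p.2).image
        fun q => (q.1.1 + 1 - q.2.1) :: q.2.1 :: q.2.2) := by
  ext (_ | ⟨a, _ | ⟨b, l⟩⟩)
  · simp [isComposition_nil_iff]
  · simp only [mem_arndtFinset, isComposition_cons_iff, isComposition_nil_iff,
      isArndt_singleton, and_true, mem_insert, List.cons.injEq, mem_image, reduceCtorEq,
      and_false, exists_const, or_false]
    omega
  · simp only [mem_arndtFinset, isComposition_cons_iff, isArndt_cons_cons_iff, mem_insert,
      mem_image, mem_sigma, HasAntidiagonal.mem_antidiagonal, mem_product, mem_Icc, List.cons.injEq,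
      reduceCtorEq, and_false, false_or, Sigma.exists, Prod.exists]
    constructor
    · rintro ⟨⟨ha, hak, hb, hbk, hl⟩, hba, harndt⟩
      exact ⟨a + b - 1, k + 1 - a - b, b, l, ⟨by omega, ⟨by omega, by omega⟩, hl, harndt⟩,
        by omega, rfl, rfl⟩
    · rintro ⟨m, r, b, l, ⟨hmr, ⟨hb1, hbm⟩, hl, harndt⟩, rfl, rfl, rfl⟩
      have hrest : k + 1 - (m + 1 - b) - b = r := by omega
      exact ⟨⟨by omega, by omega, by omega, by omega, hrest ▸ hl⟩, by omega, harndt⟩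

theorem sum_getLastD_arndtFinset (r x : ℕ) :
    ∑ l ∈ arndtFinset r, l.getLastD x = lastSum r + if r = 0 then x else 0 := by
  rcases r with _ | r
  · simp [lastSum_eq_sum, arndtFinset_zero]
  · rw [lastSum_eq_sum, if_neg r.succ_ne_zero, add_zero]
    refine sum_congr rfl fun l hl => ?_
    obtain ⟨⟨-, hsum⟩, -⟩ := mem_arndtFinset.1 hl
    cases l with
    | nil => simp at hsum
    | cons a l => simp only [List.getLastD_cons]

theorem lastSum_succ (k : ℕ) :
    lastSum (k + 1) =
      k + 1 + ∑ p ∈ antidiagonal k, (p.1 / 2) * lastSum p.2 + ∑ b ∈ Icc 1 (k / 2), b := by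
  rw [lastSum_eq_sum, arndtFinset_succ, sum_insert, sum_image, sum_sigma]
  · have hlast : ∑ p ∈ antidiagonal k, ∑ b ∈ Icc 1 (p.1 / 2), (if p.2 = 0 then b else 0) =
        ∑ b ∈ Icc 1 (k / 2), b := by
      simp only [sum_ite_irrel, sum_const_zero]
      refine (sum_eq_single_of_mem (k, 0) (by simp) fun p hp hne => if_neg ?_).trans (if_pos rfl)
      rintro h
      exact hne (Prod.ext (by simpa [h] using hp) h)
    simp only [sum_product, List.getLastD_cons, List.getLastD_nil, sum_getLastD_arndtFinset,
      sum_add_distrib, sum_const, Nat.card_Icc, Nat.add_sub_cancel, smul_eq_mul, hlast]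
    ring
  · rintro ⟨⟨m, r⟩, b, l⟩ hq ⟨⟨m', r'⟩, b', l'⟩ hq' heq
    simp only [coe_sigma, Set.mem_sigma_iff, mem_coe, HasAntidiagonal.mem_antidiagonal,
      mem_product, mem_Icc] at hq hq'
    simp only [List.cons.injEq] at heq
    obtain ⟨ha, rfl, rfl⟩ := heq
    obtain rfl : m = m' := by omega
    obtain rfl : r = r' := by omega
    rfl
  · simp

theorem sum_antidiagonal_add_two_div_two_smul {M : Type*} [AddCommMonoid M] (f : ℕ → M)
    (k : ℕ) : ∑ p ∈ antidiagonal (k + 2), (p.1 / 2) • f p.2 =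
      ∑ p ∈ antidiagonal k, (p.1 / 2) • f p.2 + ∑ i ∈ range (k + 1), f i := by
  have hshift (i : ℕ) : (i + 1 + 1) / 2 = i / 2 + 1 := by omega
  rw [Nat.sum_antidiagonal_succ, Nat.sum_antidiagonal_succ]
  have hsnd : ∑ p ∈ antidiagonal k, f p.2 = ∑ i ∈ range (k + 1), f i := by
    rw [← Nat.sum_antidiagonal_swap, Nat.sum_antidiagonal_eq_sum_range_succ_mk]
    rfl
  simp only [Nat.zero_div, zero_smul, zero_add, Nat.reduceDiv, hshift, add_smul, one_smul,
    sum_add_distrib, hsnd]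

theorem lastSum_add_three (k : ℕ) :
    lastSum (k + 3) = lastSum (k + 1) + k / 2 + 3 + ∑ i ∈ range (k + 1), lastSum i := by
  have hconv := sum_antidiagonal_add_two_div_two_smul lastSum k
  have hpairs : ∑ b ∈ Icc 1 ((k + 2) / 2), b = ∑ b ∈ Icc 1 (k / 2), b + (k / 2 + 1) := by
    rw [show (k + 2) / 2 = k / 2 + 1 by omega, sum_Icc_succ_top (by omega)]
  simp only [smul_eq_mul] at hconv
  rw [lastSum_succ (k + 2), lastSum_succ k, hconv, hpairs]
  ring

theorem lastSum_add_four (k : ℕ) :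
    lastSum (k + 4) = lastSum (k + 3) + lastSum (k + 2) + k % 2 := by
  have h3 := lastSum_add_three k
  have h4 : lastSum (k + 4) = lastSum (k + 2) + (k + 1) / 2 + 3 +
      (∑ i ∈ range (k + 1), lastSum i + lastSum (k + 1)) := by
    rw [← sum_range_succ]
    exact lastSum_add_three (k + 1)
  omega

theorem lastSum_zero : lastSum 0 = 0 := by
  simp [lastSum_eq_sum, arndtFinset_zero]

theorem lastSum_one : lastSum 1 = 1 := by
  simp [lastSum_succ, lastSum_zero]

theorem lastSum_two : lastSum 2 = 2 := by
  rw [lastSum_succ, Nat.sum_antidiagonal_succ]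
  simp

theorem lastSum_three : lastSum 3 = 4 := by
  simp [lastSum_add_three, lastSum_one, lastSum_zero]

def lucas : ℕ → ℕ
  | 0 => 2
  | 1 => 1
  | n + 2 => lucas (n + 1) + lucas n

theorem lastSum_succ_add_mod_two_eq_lucas : ∀ n : ℕ, lastSum (n + 1) + n % 2 = lucas (n + 1)
  | 0 => by simp [lastSum_one, lucas]
  | 1 => by simp [lastSum_two, lucas]
  | 2 => by simp [lastSum_three, lucas]
  | k + 3 => by
    have h₁ : lastSum (k + 3) + (k + 2) % 2 = lucas (k + 3) :=
      lastSum_succ_add_mod_two_eq_lucas (k + 2)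
    have h₂ : lastSum (k + 2) + (k + 1) % 2 = lucas (k + 2) :=
      lastSum_succ_add_mod_two_eq_lucas (k + 1)
    show lastSum (k + 4) + (k + 3) % 2 = lucas (k + 3) + lucas (k + 2)
    rw [lastSum_add_four]
    omega

open scoped goldenRatio

namespace Real

theorem lucas_eq_goldenRatio_pow_add_goldenConj_pow : ∀ n : ℕ, (lucas n : ℝ) = φ ^ n + ψ ^ n
  | 0 => by norm_num [lucas]
  | 1 => by simp [lucas, goldenRatio_add_goldenConj]
  | n + 2 => by
    rw [lucas, Nat.cast_add, lucas_eq_goldenRatio_pow_add_goldenConj_pow (n + 1),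
      lucas_eq_goldenRatio_pow_add_goldenConj_pow n, pow_add _ n 2, pow_add _ n 2, goldenRatio_sq,
      goldenConj_sq]
    ring

theorem floor_goldenRatio_pow_succ (n : ℕ) :
    ⌊φ ^ (n + 1)⌋ = (lucas (n + 1) : ℤ) - (n % 2 : ℕ) := by
  have habs : |ψ ^ (n + 1)| < 1 := by
    rw [abs_pow]
    exact pow_lt_one₀ (abs_nonneg _)
      (abs_lt.2 ⟨neg_one_lt_goldenConj, goldenConj_neg.trans one_pos⟩) n.succ_ne_zero
  have hlucas := lucas_eq_goldenRatio_pow_add_goldenConj_pow (n + 1)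
  rw [Int.floor_eq_iff]
  rcases Nat.even_or_odd n with hn | hn
  · have hneg : ψ ^ (n + 1) < 0 := hn.add_one.pow_neg goldenConj_neg
    rw [Nat.even_iff.1 hn]
    push_cast
    constructor <;> linarith [abs_lt.1 habs]
  · have hpos : 0 < ψ ^ (n + 1) := hn.add_one.pow_pos goldenConj_ne_zero
    rw [Nat.odd_iff.1 hn]
    push_cast
    constructor <;> linarith [abs_lt.1 habs]

end Real

/-- for `n ≥ 1`, `d(n) = ⌊φⁿ⌋` where `φ = (1+√5)/2`. -/
theorem lastSum_eq_floor_golden_pow (n : ℕ) (hn : 1 ≤ n) :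
    (lastSum n : ℤ) = ⌊((1 + Real.sqrt 5) / 2) ^ n⌋ := by
  obtain ⟨n, rfl⟩ := Nat.exists_eq_add_of_le' hn
  rw [← Real.goldenRatio, Real.floor_goldenRatio_pow_succ, ← lastSum_succ_add_mod_two_eq_lucas]
  push_cast
  ring
end

section
/- Fix an integer k ≥ 0. The bivariate formal power series A_k(x,y) = Σ_{n,m ≥ 0} a_k(n,m) xⁿ yᵐ over ℤ satisfies (1 - x - x² + x³ - x^{3+k} y²) · A_k(x,y) = (1 - x²)(1 - x + xy). In particular, setting y = 1, the series Σ_{n≥0} a_k(n) xⁿ satisfies (1 - x - x² + x³ - x^{k+3}) · Σ_{n≥0} a_k(n) xⁿ = 1 - x². -/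
/-- The `k`-Arndt condition: `σ_{2i-1} > σ_{2i} + k` (1-based) for every `i` with `2i ≤ ℓ`. -/
def IsKArndt (k : ℕ) (l : List ℕ) : Prop :=
  ∀ i : ℕ, 2 * i + 1 < l.length → l.getD (2 * i + 1) 0 + k < l.getD (2 * i) 0

/-- `kArndtParts k n m` is the number of `k`-Arndt compositions of `n` with exactly
`m` parts. -/
noncomputable def kArndtParts (k n m : ℕ) : ℕ :=
  Set.ncard {l : List ℕ | IsComposition n l ∧ IsKArndt k l ∧ l.length = m}

/-- `kArndt k n` is the number of `k`-Arndt compositions of `n`. -/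
noncomputable def kArndt (k n : ℕ) : ℕ :=
  Set.ncard {l : List ℕ | IsComposition n l ∧ IsKArndt k l}

/-- The bivariate generating function `A_k(x,y) = Σ_{n,m≥0} a_k(n,m) xⁿ yᵐ`,
with `x = X 0` and `y = X 1`. -/
noncomputable def kArndtGF (k : ℕ) : MvPowerSeries (Fin 2) ℤ :=
  fun d => (kArndtParts k (d 0) (d 1) : ℤ)

/-!
A `k`-Arndt composition is a sequence of leading pairs `(a, b)` with `a > b + k` and `b ≥ 1`,
followed by at most one single part. There are `⌊(s - k - 1) / 2⌋` pairs with `a + b = s`, whose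
generating function is `x^{k+3} / ((1 - x)(1 - x²))`. Hence, writing `f_m` for the series in `x`
of the compositions with `m` parts, `f_0 = 1`, `(1 - x) f_1 = x` and
`(1 - x)(1 - x²) f_{m+2} = x^{k+3} f_m`; comparing coefficients of `y^m` gives the bivariate
identity. For `y = 1`, summing the recursion over `m < N + 2` telescopes to
`1 - x² - x^{k+3} (f_N + f_{N+1})`, and the error terms have order at least `N`.
-/

open Finset

section Compositions

variable {k n m : ℕ} {l : List ℕ}

theorem isComposition_cons {a : ℕ} :
    IsComposition n (a :: l) ↔ 0 < a ∧ a ≤ n ∧ IsComposition (n - a) l := by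
  simp only [IsComposition, List.mem_cons, forall_eq_or_imp, List.sum_cons]
  constructor
  · rintro ⟨⟨ha, hl⟩, hsum⟩
    exact ⟨ha, by omega, hl, by omega⟩
  · rintro ⟨ha, han, hl, hsum⟩
    exact ⟨⟨ha, hl⟩, by omega⟩

theorem isKArndt_cons_cons {a b : ℕ} :
    IsKArndt k (a :: b :: l) ↔ b + k < a ∧ IsKArndt k l := by
  constructor
  · intro h
    refine ⟨by simpa using h 0 (by simp), fun i hi => ?_⟩
    simpa [Nat.mul_add] using h (i + 1) (by simp; omega)
  · rintro ⟨hab, hl⟩ (_ | i) hi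
    · simpa using hab
    · simpa [Nat.mul_add] using hl i (by simp at hi; omega)

theorem isKArndt_of_length_le_one (h : l.length ≤ 1) : IsKArndt k l :=
  fun _ hi => absurd hi (by omega)

open Classical in
noncomputable def kArndtComps (k n : ℕ) : Finset (List ℕ) :=
  {l ∈ univ.image (Composition.blocks (n := n)) | IsKArndt k l}

theorem mem_kArndtComps : l ∈ kArndtComps k n ↔ IsComposition n l ∧ IsKArndt k l := by
  simp only [kArndtComps, mem_filter, mem_image, mem_univ, true_and]
  refine and_congr_left fun _ => ⟨?_, fun ⟨hpos, hsum⟩ => ⟨⟨l, hpos _, hsum⟩, rfl⟩⟩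
  rintro ⟨c, rfl⟩
  exact ⟨fun _ => c.blocks_pos, c.blocks_sum⟩

theorem kArndt_eq_card : kArndt k n = #(kArndtComps k n) := by
  rw [kArndt, ← Set.ncard_coe_finset]
  congr
  ext
  simp [mem_kArndtComps]

theorem kArndtParts_eq_card : kArndtParts k n m = #{l ∈ kArndtComps k n | l.length = m} := by
  rw [kArndtParts, ← Set.ncard_coe_finset]
  congr
  ext
  simp [mem_kArndtComps, and_assoc]

theorem length_le_of_mem_kArndtComps (h : l ∈ kArndtComps k n) : l.length ≤ n := by
  obtain ⟨⟨hpos, rfl⟩, -⟩ := mem_kArndtComps.1 h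
  exact List.length_le_sum_of_one_le l hpos

theorem kArndtParts_eq_zero_of_lt (h : n < m) : kArndtParts k n m = 0 := by
  rw [kArndtParts_eq_card, card_eq_zero, filter_eq_empty_iff]
  intro l hl
  have := length_le_of_mem_kArndtComps hl
  omega

theorem kArndt_eq_sum_kArndtParts {N : ℕ} (h : n < N) :
    kArndt k n = ∑ m ∈ range N, kArndtParts k n m := by
  rw [kArndt_eq_card, card_eq_sum_card_fiberwise (f := List.length) (t := range N)]
  · simp only [kArndtParts_eq_card]
  · intro l hl
    have := length_le_of_mem_kArndtComps hl
    simp only [coe_range, Set.mem_Iio]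
    omega

theorem kArndtParts_zero : kArndtParts k n 0 = if n = 0 then 1 else 0 := by
  rw [kArndtParts_eq_card]
  split_ifs with hn
  · rw [card_eq_one]
    refine ⟨[], ?_⟩
    ext l
    simp only [mem_filter, mem_kArndtComps, List.length_eq_zero_iff, mem_singleton,
      and_iff_right_iff_imp]
    rintro rfl
    exact ⟨⟨by simp, by simp [hn]⟩, isKArndt_of_length_le_one (by simp)⟩
  · rw [card_eq_zero, filter_eq_empty_iff]
    intro l hl hlen
    rw [List.length_eq_zero_iff] at hlen
    subst hlen
    exact hn (mem_kArndtComps.1 hl).1.2.symm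

theorem kArndtParts_one : kArndtParts k n 1 = if 0 < n then 1 else 0 := by
  rw [kArndtParts_eq_card]
  split_ifs with hn
  · rw [card_eq_one]
    refine ⟨[n], ?_⟩
    ext l
    simp only [mem_filter, mem_kArndtComps, mem_singleton, List.length_eq_one_iff]
    constructor
    · rintro ⟨⟨⟨-, hsum⟩, -⟩, a, rfl⟩
      simpa using hsum
    · rintro rfl
      exact ⟨⟨⟨by simpa using hn, by simp⟩, isKArndt_of_length_le_one le_rfl⟩, _, rfl⟩
  · rw [card_eq_zero, filter_eq_empty_iff]
    rintro l hl hlen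
    obtain ⟨a, rfl⟩ := List.length_eq_one_iff.1 hlen
    obtain ⟨⟨hpos, hsum⟩, -⟩ := mem_kArndtComps.1 hl
    have := hpos a (by simp)
    simp at hsum
    omega

theorem cons_cons_mem_kArndtComps {a b : ℕ} :
    a :: b :: l ∈ kArndtComps k n ↔
      0 < b ∧ b + k < a ∧ a + b ≤ n ∧ l ∈ kArndtComps k (n - (a + b)) := by
  simp only [mem_kArndtComps, isComposition_cons, isKArndt_cons_cons, Nat.sub_sub]
  constructor
  · rintro ⟨⟨-, han, hb, hbn, hl⟩, hba, hk⟩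
    exact ⟨hb, hba, by omega, hl, hk⟩
  · rintro ⟨hb, hba, habn, hl, hk⟩
    exact ⟨⟨by omega, by omega, hb, by omega, hl⟩, hba, hk⟩

/-- A composition `a :: b :: l` with `a + b = s` corresponds to `(b, l)` with
`1 ≤ b ≤ (s - (k + 1)) / 2`. -/
theorem kArndtParts_add_two :
    kArndtParts k n (m + 2) =
      ∑ st ∈ antidiagonal n, (st.1 - (k + 1)) / 2 * kArndtParts k st.2 m := by
  have hfiber (st : ℕ × ℕ) :
      (st.1 - (k + 1)) / 2 * #{l ∈ kArndtComps k st.2 | l.length = m} =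
      #(Icc 1 ((st.1 - (k + 1)) / 2) ×ˢ {l ∈ kArndtComps k st.2 | l.length = m}) := by
    rw [card_product, Nat.card_Icc, Nat.add_sub_cancel]
  simp only [kArndtParts_eq_card, hfiber]
  rw [← card_sigma]
  refine card_nbij'
    (fun l => (⟨(l.getD 0 0 + l.getD 1 0, n - (l.getD 0 0 + l.getD 1 0)),
      (l.getD 1 0, l.drop 2)⟩ : Σ _ : ℕ × ℕ, ℕ × List ℕ))
    (fun x => (x.1.1 - x.2.1) :: x.2.1 :: x.2.2) ?_ ?_ ?_ ?_
  · rintro (_ | ⟨a, _ | ⟨b, r⟩⟩) hl <;>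
      simp only [mem_coe, mem_filter, List.length_cons, List.length_nil] at hl
    · omega
    · omega
    simp only [cons_cons_mem_kArndtComps] at hl
    simp only [mem_coe, mem_sigma, mem_product, mem_Icc, mem_filter,
      HasAntidiagonal.mem_antidiagonal, List.getD_cons_zero, List.getD_cons_succ,
      List.drop_succ_cons, List.drop_zero]
    refine ⟨by omega, ⟨by omega, by omega⟩, hl.1.2.2.2, by omega⟩
  · rintro ⟨⟨s, t⟩, b, r⟩ hx
    simp only [mem_coe, mem_sigma, mem_product, mem_Icc, mem_filter,
      HasAntidiagonal.mem_antidiagonal] at hx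
    obtain ⟨rfl, ⟨hb1, hb2⟩, hr, rfl⟩ := hx
    simp only [mem_coe, mem_filter, cons_cons_mem_kArndtComps, List.length_cons]
    refine ⟨⟨by omega, by omega, by omega, ?_⟩, trivial⟩
    rwa [show s + t - (s - b + b) = t by omega]
  · rintro (_ | ⟨a, _ | ⟨b, r⟩⟩) hl <;>
      simp only [mem_coe, mem_filter, List.length_cons, List.length_nil] at hl
    · omega
    · omega
    simp
  · rintro ⟨⟨s, t⟩, b, r⟩ hx
    simp only [mem_coe, mem_sigma, mem_product, mem_Icc, mem_filter,
      HasAntidiagonal.mem_antidiagonal] at hx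
    obtain ⟨rfl, ⟨hb1, hb2⟩, -⟩ := hx
    simp only [List.getD_cons_zero, List.getD_cons_succ, List.drop_succ_cons, List.drop_zero,
      Sigma.mk.injEq, Prod.mk.injEq, heq_eq_eq, and_true]
    omega

end Compositions

section Series

open PowerSeries

variable {k : ℕ}

noncomputable def kArndtPartsSeries (k m : ℕ) : ℤ⟦X⟧ :=
  mk fun n => (kArndtParts k n m : ℤ)

/-- `(s - (k + 1)) / 2` is the number of pairs `a > b + k`, `b ≥ 1` with `a + b = s`. -/
noncomputable def kArndtPairSeries (k : ℕ) : ℤ⟦X⟧ :=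
  mk fun s => (((s - (k + 1)) / 2 : ℕ) : ℤ)

theorem one_sub_X_mul_one_sub_X_sq_mul_kArndtPairSeries :
    (1 - X) * (1 - X ^ 2) * kArndtPairSeries k = X ^ (k + 3) := by
  ext s
  rw [show (1 - X) * (1 - X ^ 2) * kArndtPairSeries k = X ^ 0 * kArndtPairSeries k -
      X ^ 1 * kArndtPairSeries k - X ^ 2 * kArndtPairSeries k + X ^ 3 * kArndtPairSeries k by ring]
  simp only [map_sub, map_add, coeff_X_pow_mul', coeff_X_pow, kArndtPairSeries, coeff_mk]
  split_ifs <;> omega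

theorem kArndtPartsSeries_zero : kArndtPartsSeries k 0 = 1 := by
  ext n
  simp [kArndtPartsSeries, kArndtParts_zero, coeff_one]

theorem one_sub_X_mul_kArndtPartsSeries_one : (1 - X) * kArndtPartsSeries k 1 = X := by
  ext n
  rw [sub_mul, one_mul, ← pow_one X]
  simp only [map_sub, coeff_X_pow_mul', coeff_X_pow, kArndtPartsSeries, coeff_mk, kArndtParts_one]
  split_ifs <;> omega

theorem kArndtPartsSeries_add_two (m : ℕ) :
    kArndtPartsSeries k (m + 2) = kArndtPairSeries k * kArndtPartsSeries k m := by
  ext n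
  simp [kArndtPartsSeries, kArndtPairSeries, coeff_mul, kArndtParts_add_two]

theorem one_sub_X_mul_one_sub_X_sq_mul_kArndtPartsSeries_add_two (m : ℕ) :
    (1 - X) * (1 - X ^ 2) * kArndtPartsSeries k (m + 2) = X ^ (k + 3) * kArndtPartsSeries k m := by
  rw [kArndtPartsSeries_add_two, ← mul_assoc, one_sub_X_mul_one_sub_X_sq_mul_kArndtPairSeries]

theorem X_pow_dvd_kArndtPartsSeries (m : ℕ) : X ^ m ∣ kArndtPartsSeries k m :=
  X_pow_dvd_iff.2 fun n hn => by
    simp [kArndtPartsSeries, kArndtParts_eq_zero_of_lt hn]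

theorem X_pow_dvd_mk_kArndt_sub_sum (N : ℕ) :
    X ^ N ∣
      PowerSeries.mk (fun n => (kArndt k n : ℤ)) - ∑ m ∈ range N, kArndtPartsSeries k m :=
  X_pow_dvd_iff.2 fun n hn => by
    simp [kArndtPartsSeries, kArndt_eq_sum_kArndtParts hn]

theorem mul_sum_range_kArndtPartsSeries (N : ℕ) :
    (1 - X - X ^ 2 + X ^ 3 - X ^ (k + 3)) * ∑ m ∈ range (N + 2), kArndtPartsSeries k m =
      1 - X ^ 2 - X ^ (k + 3) * (kArndtPartsSeries k N + kArndtPartsSeries k (N + 1)) := by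
  induction N with
  | zero =>
    simp only [sum_range_succ, sum_range_zero, zero_add, kArndtPartsSeries_zero]
    linear_combination (1 - X ^ 2) * one_sub_X_mul_kArndtPartsSeries_one (k := k)
  | succ N ih =>
    rw [sum_range_succ, mul_add, ih]
    linear_combination one_sub_X_mul_one_sub_X_sq_mul_kArndtPartsSeries_add_two (k := k) N

theorem PowerSeries.eq_zero_of_forall_X_pow_dvd {R : Type*} [Semiring R] {f : R⟦X⟧}
    (h : ∀ N, X ^ N ∣ f) : f = 0 :=
  ext fun n => by simpa using X_pow_dvd_iff.1 (h (n + 1)) n (by omega)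

theorem mul_mk_kArndt_eq (k : ℕ) :
    (1 - X - X ^ 2 + X ^ 3 - X ^ (k + 3)) * PowerSeries.mk (fun n => (kArndt k n : ℤ)) =
      1 - X ^ 2 := by
  set G := PowerSeries.mk (fun n => (kArndt k n : ℤ))
  refine sub_eq_zero.1 (eq_zero_of_forall_X_pow_dvd fun N => ?_)
  have htrunc := X_pow_dvd_mk_kArndt_sub_sum (k := k) (N + 2)
  have hN := X_pow_dvd_kArndtPartsSeries (k := k) N
  have hN' := (pow_dvd_pow X N.le_succ).trans (X_pow_dvd_kArndtPartsSeries (k := k) (N + 1))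
  have hsplit : (1 - X - X ^ 2 + X ^ 3 - X ^ (k + 3)) * G - (1 - X ^ 2) =
      (1 - X - X ^ 2 + X ^ 3 - X ^ (k + 3)) * (G - ∑ m ∈ range (N + 2), kArndtPartsSeries k m) -
        X ^ (k + 3) * (kArndtPartsSeries k N + kArndtPartsSeries k (N + 1)) := by
    linear_combination mul_sum_range_kArndtPartsSeries (k := k) N
  rw [hsplit]
  exact dvd_sub (((pow_dvd_pow X (by omega)).trans htrunc).mul_left _) ((dvd_add hN hN').mul_left _)

end Series

section Bivariate

open PowerSeries

noncomputable def bidegree (n m : ℕ) : Fin 2 →₀ ℕ := Finsupp.single 0 n + Finsupp.single 1 m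

@[simp] theorem bidegree_apply_zero (n m : ℕ) : bidegree n m 0 = n := by simp [bidegree]

@[simp] theorem bidegree_apply_one (n m : ℕ) : bidegree n m 1 = m := by simp [bidegree]

theorem bidegree_apply_self (d : Fin 2 →₀ ℕ) : bidegree (d 0) (d 1) = d := by
  ext i
  fin_cases i <;> simp

theorem bidegree_eq_zero {n m : ℕ} : bidegree n m = 0 ↔ n = 0 ∧ m = 0 := by
  simp [Finsupp.ext_iff, Fin.forall_fin_two]

theorem bidegree_le_bidegree {a b n m : ℕ} :
    bidegree a b ≤ bidegree n m ↔ a ≤ n ∧ b ≤ m := by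
  simp [Finsupp.le_def, Fin.forall_fin_two]

theorem bidegree_tsub_bidegree (a b n m : ℕ) :
    bidegree n m - bidegree a b = bidegree (n - a) (m - b) := by
  ext i
  fin_cases i <;> simp

variable {R : Type*} [CommSemiring R]

noncomputable def coeffY (m : ℕ) : MvPowerSeries (Fin 2) R →+ R⟦X⟧ where
  toFun F := mk fun n => MvPowerSeries.coeff (bidegree n m) F
  map_zero' := by ext; simp
  map_add' _ _ := by ext; simp

theorem coeff_coeffY (n m : ℕ) (F : MvPowerSeries (Fin 2) R) :
    coeff n (coeffY m F) = MvPowerSeries.coeff (bidegree n m) F := by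
  simp [coeffY]

theorem ext_coeffY {F G : MvPowerSeries (Fin 2) R} (h : ∀ m, coeffY m F = coeffY m G) : F = G :=
  MvPowerSeries.ext fun d => by
    simpa [coeff_coeffY, bidegree_apply_self] using congr_arg (coeff (d 0)) (h (d 1))

theorem coeffY_X_pow_mul_X_pow_mul (a b m : ℕ) (F : MvPowerSeries (Fin 2) R) :
    coeffY m (MvPowerSeries.X 0 ^ a * MvPowerSeries.X 1 ^ b * F) =
      if b ≤ m then X ^ a * coeffY (m - b) F else 0 := by
  have hmono : (MvPowerSeries.X 0 ^ a * MvPowerSeries.X 1 ^ b : MvPowerSeries (Fin 2) R) =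
      MvPowerSeries.monomial (bidegree a b) 1 := by
    rw [MvPowerSeries.X_pow_eq, MvPowerSeries.X_pow_eq, MvPowerSeries.monomial_mul_monomial,
      one_mul, bidegree]
  ext n
  simp only [coeff_coeffY, hmono, MvPowerSeries.coeff_monomial_mul, bidegree_le_bidegree,
    bidegree_tsub_bidegree, one_mul]
  split_ifs <;> simp_all [coeff_X_pow_mul', coeff_coeffY]

theorem coeffY_one (m : ℕ) : coeffY m (1 : MvPowerSeries (Fin 2) R) = if m = 0 then 1 else 0 := by
  ext n
  simp only [coeff_coeffY, MvPowerSeries.coeff_one, bidegree_eq_zero]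
  split_ifs <;> simp_all [coeff_one]

theorem coeffY_kArndtGF (k m : ℕ) : coeffY m (kArndtGF k) = kArndtPartsSeries k m := by
  ext n
  rw [coeff_coeffY, kArndtPartsSeries, coeff_mk]
  change (kArndtParts k (bidegree n m 0) (bidegree n m 1) : ℤ) = _
  simp

theorem mul_kArndtGF_eq (k : ℕ) :
    (1 - MvPowerSeries.X 0 - MvPowerSeries.X 0 ^ 2 + MvPowerSeries.X 0 ^ 3
          - MvPowerSeries.X 0 ^ (3 + k) * MvPowerSeries.X 1 ^ 2) * kArndtGF k
        = (1 - MvPowerSeries.X 0 ^ 2) *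
          (1 - MvPowerSeries.X 0 + MvPowerSeries.X 0 * MvPowerSeries.X 1) := by
  set x : MvPowerSeries (Fin 2) ℤ := MvPowerSeries.X 0
  set y : MvPowerSeries (Fin 2) ℤ := MvPowerSeries.X 1
  set A := kArndtGF k
  have hL : (1 - x - x ^ 2 + x ^ 3 - x ^ (3 + k) * y ^ 2) * A =
      x ^ 0 * y ^ 0 * A - x ^ 1 * y ^ 0 * A - x ^ 2 * y ^ 0 * A + x ^ 3 * y ^ 0 * A -
        x ^ (k + 3) * y ^ 2 * A := by ring
  have hR : (1 - x ^ 2) * (1 - x + x * y) =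
      x ^ 0 * y ^ 0 * 1 - x ^ 1 * y ^ 0 * 1 + x ^ 1 * y ^ 1 * 1 - x ^ 2 * y ^ 0 * 1 +
        x ^ 3 * y ^ 0 * 1 - x ^ 3 * y ^ 1 * 1 := by ring
  refine ext_coeffY fun m => ?_
  rw [hL, hR]
  simp only [map_add, map_sub, x, y, A, coeffY_X_pow_mul_X_pow_mul, coeffY_kArndtGF, coeffY_one]
  rcases m with _ | _ | m
  · simp [kArndtPartsSeries_zero]
  · simp only [zero_add, zero_le, ↓reduceIte, pow_zero, tsub_zero, one_mul, pow_one,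
      Nat.not_ofNat_le_one, sub_zero, one_ne_zero, mul_zero, sub_self, le_refl, tsub_self,
      mul_one, add_zero]
    linear_combination (1 - X ^ 2) * one_sub_X_mul_kArndtPartsSeries_one (k := k)
  · simp only [le_add_iff_nonneg_left, zero_le, ↓reduceIte, pow_zero, tsub_zero, one_mul,
      pow_one, Nat.reduceSubDiff, Nat.add_eq_zero_iff, one_ne_zero, and_false, and_self,
      mul_zero, sub_self, add_tsub_cancel_right, add_zero]
    linear_combination one_sub_X_mul_one_sub_X_sq_mul_kArndtPartsSeries_add_two (k := k) m

end Bivariate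

/-- for `k ≥ 0`,
`(1 - x - x² + x³ - x^{3+k} y²) · A_k(x,y) = (1 - x²)(1 - x + xy)`, and setting `y = 1`,
`(1 - x - x² + x³ - x^{k+3}) · Σ_{n≥0} a_k(n) xⁿ = 1 - x²`. -/
theorem kArndtGF_eq (k : ℕ) :
    (1 - MvPowerSeries.X 0 - MvPowerSeries.X 0 ^ 2 + MvPowerSeries.X 0 ^ 3
          - MvPowerSeries.X 0 ^ (3 + k) * MvPowerSeries.X 1 ^ 2) * kArndtGF k
        = (1 - MvPowerSeries.X 0 ^ 2) *
          (1 - MvPowerSeries.X 0 + MvPowerSeries.X 0 * MvPowerSeries.X 1) ∧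
      (1 - PowerSeries.X - PowerSeries.X ^ 2 + PowerSeries.X ^ 3 - PowerSeries.X ^ (k + 3)) *
          PowerSeries.mk (fun n => (kArndt k n : ℤ)) =
        1 - PowerSeries.X ^ 2 :=
  ⟨mul_kArndtGF_eq k, mul_mk_kArndt_eq k⟩
end
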